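/- Let T₃^high = [−π/2, 3π/2)³ \ [−π/2, π/2)³. Define μ(ω) = sup_{(θ₁,θ₂,θ₃) ∈ T₃^high} |1 − ω · (2/27)(2 + cos θ₁)(2 + cos θ₂)(2 + cos θ₃)(3 − cos θ₁ − cos θ₂ − cos θ₃)| for ω ∈ ℝ. Then μ(729/848) = 131/212, and μ(ω) > 131/212 for every real ω ≠ 729/848. In other words, the optimal smoothing factor of the mass-based relaxation (using the trilinear finite element mass operator) for the 3D Laplacian is 131/212, uniquely achieved at ω = 729/848. -/
import Mathlib

open Real

def T3high : Set (ℝ × ℝ × ℝ) :=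
  (Set.Ico (-(π / 2)) (3 * π / 2) ×ˢ
      (Set.Ico (-(π / 2)) (3 * π / 2) ×ˢ Set.Ico (-(π / 2)) (3 * π / 2))) \
    (Set.Ico (-(π / 2)) (π / 2) ×ˢ (Set.Ico (-(π / 2)) (π / 2) ×ˢ Set.Ico (-(π / 2)) (π / 2)))

noncomputable def muMass3 (ω : ℝ) : ℝ :=
  sSup ((fun θ : ℝ × ℝ × ℝ =>
    |1 - ω * ((2 / 27) * (2 + cos θ.1) * (2 + cos θ.2.1) * (2 + cos θ.2.2) *
      (3 - cos θ.1 - cos θ.2.1 - cos θ.2.2))|) '' T3high)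

private theorem amgm3 (y z w : ℝ) (hy : 0 ≤ y) (hz : 0 ≤ z) (hw : 0 ≤ w) :
    27*(y*z*w) ≤ (y+z+w)^3 := by
  nlinarith [mul_nonneg hy (sq_nonneg (z-w)), mul_nonneg hz (sq_nonneg (y-w)),
    mul_nonneg hw (sq_nonneg (y-z)), mul_nonneg (mul_nonneg hy hz) hw]

private theorem gLB (a b c : ℝ) (ha1 : -1 ≤ a) (ha0 : a ≤ 0) (hb1 : -1 ≤ b) (hb2 : b ≤ 1)
    (hc1 : -1 ≤ c) (hc2 : c ≤ 1) :
    6 ≤ (2+a)*(2+b)*(2+c)*(3-a-b-c) := by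
  nlinarith [mul_nonneg (mul_nonneg (by linarith : (0:ℝ) ≤ 1+a) (by linarith : (0:ℝ) ≤ 1+b)) (by linarith : (0:ℝ) ≤ 1+c),
    mul_nonneg (by linarith : (0:ℝ) ≤ 1+a) (by linarith : (0:ℝ) ≤ 1+b),
    mul_nonneg (by linarith : (0:ℝ) ≤ 1+b) (by linarith : (0:ℝ) ≤ 1+c),
    mul_nonneg (by linarith : (0:ℝ) ≤ 1+a) (by linarith : (0:ℝ) ≤ 1+c),
    mul_nonneg (by linarith : (0:ℝ) ≤ 3+a+b+c) (by linarith : (0:ℝ) ≤ 2-a-b-c),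
    mul_nonneg (mul_nonneg (mul_nonneg (by linarith : (0:ℝ) ≤ 1+a) (by linarith : (0:ℝ) ≤ 1+b)) (by linarith : (0:ℝ) ≤ 1+c)) (by linarith : (0:ℝ) ≤ 1-a-b-c+2)]

private theorem gUB (a b c : ℝ) (ha1 : -1 ≤ a) (ha0 : a ≤ 0) (hb1 : -1 ≤ b) (hb2 : b ≤ 1)
    (hc1 : -1 ≤ c) (hc2 : c ≤ 1) :
    (2+a)*(2+b)*(2+c)*(3-a-b-c) ≤ 686/27 := by
  have h1 : 27*((2+b)*(2+c)*(3-a-b-c)) ≤ ((2+b)+(2+c)+(3-a-b-c))^3 :=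
    amgm3 _ _ _ (by linarith) (by linarith) (by linarith)
  have h2 : (0:ℝ) ≤ 2+a := by linarith
  have h3 : (2+a)*((7-a)^3) ≤ 686 := by
    nlinarith [sq_nonneg a, mul_nonneg (neg_nonneg.2 ha0) (sq_nonneg a), sq_nonneg (a*a)]
  have h4 : (2+a)*(27*((2+b)*(2+c)*(3-a-b-c))) ≤ (2+a)*((7-a)^3) := by
    apply mul_le_mul_of_nonneg_left _ h2
    calc 27*((2+b)*(2+c)*(3-a-b-c)) ≤ ((2+b)+(2+c)+(3-a-b-c))^3 := h1
      _ = (7-a)^3 := by ring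
  nlinarith [h4, h3]

/-- The symbol value. -/
noncomputable def G3 (θ : ℝ × ℝ × ℝ) : ℝ :=
  (2 / 27) * (2 + cos θ.1) * (2 + cos θ.2.1) * (2 + cos θ.2.2) *
      (3 - cos θ.1 - cos θ.2.1 - cos θ.2.2)

private theorem gRange {θ : ℝ × ℝ × ℝ} (hθ : θ ∈ T3high) :
    4/9 ≤ G3 θ ∧ G3 θ ≤ 1372/729 := by
  obtain ⟨⟨h1, h2, h3⟩, hn⟩ := hθ
  simp only [Set.mem_prod, Set.mem_Ico, not_and_or, not_and, not_lt, not_le] at hn h1 h2 h3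
  have c1a : -1 ≤ cos θ.1 := neg_one_le_cos _
  have c1b : cos θ.1 ≤ 1 := cos_le_one _
  have c2a : -1 ≤ cos θ.2.1 := neg_one_le_cos _
  have c2b : cos θ.2.1 ≤ 1 := cos_le_one _
  have c3a : -1 ≤ cos θ.2.2 := neg_one_le_cos _
  have c3b : cos θ.2.2 ≤ 1 := cos_le_one _
  have hpi := pi_pos
  have key : cos θ.1 ≤ 0 ∨ cos θ.2.1 ≤ 0 ∨ cos θ.2.2 ≤ 0 := by
    rcases hn with (h | h) | (h | h) | (h | h)
    · exact absurd h (by linarith [h1.1])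
    · exact Or.inl (cos_nonpos_of_pi_div_two_le_of_le h (by linarith [h1.2]))
    · exact absurd h (by linarith [h2.1])
    · exact Or.inr (Or.inl (cos_nonpos_of_pi_div_two_le_of_le h (by linarith [h2.2])))
    · exact absurd h (by linarith [h3.1])
    · exact Or.inr (Or.inr (cos_nonpos_of_pi_div_two_le_of_le h (by linarith [h3.2])))
  unfold G3
  rcases key with h | h | h
  · have L := gLB (cos θ.1) (cos θ.2.1) (cos θ.2.2) c1a h c2a c2b c3a c3b
    have U := gUB (cos θ.1) (cos θ.2.1) (cos θ.2.2) c1a h c2a c2b c3a c3b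
    constructor <;> linarith
  · have L := gLB (cos θ.2.1) (cos θ.1) (cos θ.2.2) c2a h c1a c1b c3a c3b
    have U := gUB (cos θ.2.1) (cos θ.1) (cos θ.2.2) c2a h c1a c1b c3a c3b
    constructor <;> linarith
  · have L := gLB (cos θ.2.2) (cos θ.1) (cos θ.2.1) c3a h c1a c1b c2a c2b
    have U := gUB (cos θ.2.2) (cos θ.1) (cos θ.2.1) c3a h c1a c1b c2a c2b
    constructor <;> linarith

private theorem pmem : ((π:ℝ), (π:ℝ), (π:ℝ)) ∈ T3high := by
  have hpi := pi_pos
  constructor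
  · refine ⟨⟨by linarith, by linarith⟩, ⟨by linarith, by linarith⟩, by linarith, by linarith⟩
  · intro h
    have : π < π / 2 := h.1.2
    linarith

private theorem qmem : ((π/2:ℝ), Real.arccos (1/3), Real.arccos (1/3)) ∈ T3high := by
  have hpi := pi_pos
  have ha1 : 0 ≤ Real.arccos (1/3) := Real.arccos_nonneg _
  have ha2 : Real.arccos (1/3) ≤ π := Real.arccos_le_pi _
  constructor
  · exact ⟨⟨by linarith, by linarith⟩, ⟨by linarith, by linarith⟩, by linarith, by linarith⟩
  · intro h
    have : π / 2 < π / 2 := h.1.2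
    linarith

private theorem Gp : G3 ((π:ℝ), (π:ℝ), (π:ℝ)) = 4/9 := by
  show (2 / 27) * (2 + cos π) * (2 + cos π) * (2 + cos π) * (3 - cos π - cos π - cos π) = 4/9
  rw [Real.cos_pi]; norm_num

private theorem Gq : G3 ((π/2:ℝ), Real.arccos (1/3), Real.arccos (1/3)) = 1372/729 := by
  have h : Real.cos (Real.arccos (1/3)) = 1/3 :=
    Real.cos_arccos (by norm_num) (by norm_num)
  show (2 / 27) * (2 + cos (π/2)) * (2 + cos (arccos (1/3))) * (2 + cos (arccos (1/3))) *
      (3 - cos (π/2) - cos (arccos (1/3)) - cos (arccos (1/3))) = 1372/729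
  rw [Real.cos_pi_div_two, h]; norm_num

private theorem muEq (ω : ℝ) : muMass3 ω = sSup ((fun θ : ℝ × ℝ × ℝ => |1 - ω * G3 θ|) '' T3high) := rfl

private theorem bdd (ω : ℝ) :
    BddAbove ((fun θ : ℝ × ℝ × ℝ => |1 - ω * G3 θ|) '' T3high) := by
  refine ⟨1 + 2 * |ω|, ?_⟩
  rintro y ⟨θ, hθ, rfl⟩
  obtain ⟨hg1, hg2⟩ := gRange hθ
  have h1 : |1 - ω * G3 θ| ≤ |(1:ℝ)| + |ω * G3 θ| := abs_sub _ _
  have h2 : |ω * G3 θ| = |ω| * |G3 θ| := abs_mul _ _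
  have h3 : |G3 θ| ≤ 2 := by rw [abs_le]; constructor <;> linarith
  have h4 : |ω| * |G3 θ| ≤ |ω| * 2 := mul_le_mul_of_nonneg_left h3 (abs_nonneg _)
  simp only [abs_one] at h1
  linarith

theorem stmt_15 :
    muMass3 (729 / 848) = 131 / 212 ∧ ∀ ω : ℝ, ω ≠ 729 / 848 → 131 / 212 < muMass3 ω := by
  constructor
  · rw [muEq]
    apply le_antisymm
    · apply Real.sSup_le
      · rintro y ⟨θ, hθ, rfl⟩
        obtain ⟨hg1, hg2⟩ := gRange hθ
        rw [abs_le]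
        constructor <;> [linarith; linarith]
      · norm_num
    · apply le_csSup (bdd _)
      refine ⟨((π:ℝ), (π:ℝ), (π:ℝ)), pmem, ?_⟩
      show |1 - 729 / 848 * G3 ((π:ℝ), (π:ℝ), (π:ℝ))| = 131 / 212
      rw [Gp, abs_of_nonneg (by norm_num : (0:ℝ) ≤ 1 - 729/848 * (4/9))]
      norm_num
  · intro ω hω
    rcases lt_or_gt_of_ne hω with h | h
    · have hmem : |1 - ω * G3 ((π:ℝ), (π:ℝ), (π:ℝ))| ∈
          ((fun θ : ℝ × ℝ × ℝ => |1 - ω * G3 θ|) '' T3high) :=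
        ⟨_, pmem, rfl⟩
      have hle := le_csSup (bdd ω) hmem
      rw [muEq]
      have : (131:ℝ)/212 < |1 - ω * G3 ((π:ℝ), (π:ℝ), (π:ℝ))| := by
        rw [Gp]
        calc (131:ℝ)/212 < 1 - ω * (4/9) := by linarith
          _ ≤ |1 - ω * (4/9)| := le_abs_self _
      linarith
    · have hmem : |1 - ω * G3 ((π/2:ℝ), Real.arccos (1/3), Real.arccos (1/3))| ∈
          ((fun θ : ℝ × ℝ × ℝ => |1 - ω * G3 θ|) '' T3high) :=
        ⟨_, qmem, rfl⟩
      have hle := le_csSup (bdd ω) hmem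
      rw [muEq]
      have : (131:ℝ)/212 < |1 - ω * G3 ((π/2:ℝ), Real.arccos (1/3), Real.arccos (1/3))| := by
        rw [Gq]
        calc (131:ℝ)/212 < -(1 - ω * (1372/729)) := by linarith
          _ ≤ |1 - ω * (1372/729)| := neg_le_abs _
      linarith
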